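/- arXiv:0804.3575 — 7 statements merged into one kernel-verified Lean document; each statement's English description precedes it below -/
import Mathlib

section
/- For any two nonzero vectors a, b in Euclidean space, |aᵀb| / (‖a‖‖b‖) ≥ (1 − ‖a−b‖²/max{‖a‖², ‖b‖²})^{1/2}, provided ‖a−b‖² ≤ max{‖a‖², ‖b‖²}. -/
/-!
Write `m ≤ M` for `‖a‖², ‖b‖²` in increasing order and `c = ⟪a, b⟫`. Then
`1 - ‖a - b‖² / M = (2c - m) / M`, while the squared cosine is `c² / (m M)`, so the inequality
reduces to `m (2c - m) ≤ c²`, i.e. `(c - m)² ≥ 0`.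
-/

open scoped RealInnerProductSpace

theorem one_sub_div_max_le_sq_div_mul {x y : ℝ} (hx : 0 < x) (hy : 0 < y) (c : ℝ) :
    1 - (x - 2 * c + y) / max x y ≤ c ^ 2 / (x * y) := by
  have hm : 0 < min x y := lt_min hx hy
  have hM : 0 < max x y := lt_max_of_lt_left hx
  have key : min x y * (2 * c - min x y) ≤ c ^ 2 := by nlinarith [sq_nonneg (c - min x y)]
  calc 1 - (x - 2 * c + y) / max x y = min x y * (2 * c - min x y) / (min x y * max x y) := by
        rw [show x - 2 * c + y = min x y + max x y - 2 * c by linarith [min_add_max x y]]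
        field_simp
        ring
    _ ≤ c ^ 2 / (min x y * max x y) := by gcongr
    _ = c ^ 2 / (x * y) := by rw [min_mul_max]

theorem one_sub_norm_sub_sq_div_max_le_sq_cos {E : Type*} [NormedAddCommGroup E]
    [InnerProductSpace ℝ E] {a b : E} (ha : a ≠ 0) (hb : b ≠ 0) :
    1 - ‖a - b‖ ^ 2 / max (‖a‖ ^ 2) (‖b‖ ^ 2) ≤ (⟪a, b⟫ / (‖a‖ * ‖b‖)) ^ 2 := by
  rw [norm_sub_sq_real, div_pow, mul_pow]
  exact one_sub_div_max_le_sq_div_mul (by positivity) (by positivity) _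

theorem stmt_1_general {n : ℕ} (a b : EuclideanSpace ℝ (Fin n)) (ha : a ≠ 0) (hb : b ≠ 0) :
    Real.sqrt (1 - ‖a - b‖ ^ 2 / max (‖a‖ ^ 2) (‖b‖ ^ 2)) ≤ |⟪a, b⟫| / (‖a‖ * ‖b‖) := by
  have hab : 0 < ‖a‖ * ‖b‖ := by positivity
  calc Real.sqrt (1 - ‖a - b‖ ^ 2 / max (‖a‖ ^ 2) (‖b‖ ^ 2))
      ≤ Real.sqrt ((⟪a, b⟫ / (‖a‖ * ‖b‖)) ^ 2) :=
        Real.sqrt_le_sqrt (one_sub_norm_sub_sq_div_max_le_sq_cos ha hb)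
    _ = |⟪a, b⟫| / (‖a‖ * ‖b‖) := by rw [Real.sqrt_sq_eq_abs, abs_div, abs_of_pos hab]

/-- For any two nonzero vectors `a, b ∈ ℝⁿ`, with `‖a−b‖² ≤ max{‖a‖², ‖b‖²}`,
`|⟪a,b⟫| / (‖a‖‖b‖) ≥ √(1 − ‖a−b‖² / max{‖a‖², ‖b‖²})`. -/
theorem stmt_1 {n : ℕ} (a b : EuclideanSpace ℝ (Fin n)) (ha : a ≠ 0) (hb : b ≠ 0)
    (h : ‖a - b‖ ^ 2 ≤ max (‖a‖ ^ 2) (‖b‖ ^ 2)) :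
    Real.sqrt (1 - ‖a - b‖ ^ 2 / max (‖a‖ ^ 2) (‖b‖ ^ 2)) ≤ |⟪a, b⟫| / (‖a‖ * ‖b‖) :=
  stmt_1_general a b ha hb
end

section
/- Let w₁, w₂ > 0 with w₁ + w₂ = 1, means μ₁, μ₂ ∈ ℝⁿ with w₁μ₁ + w₂μ₂ = 0, and symmetric positive semi-definite matrices Σ₁, Σ₂. Define J(p) = (pᵀ(w₁Σ₁ + w₂Σ₂)p) / (pᵀ(w₁(Σ₁+μ₁μ₁ᵀ) + w₂(Σ₂+μ₂μ₂ᵀ))p) for a unit vector p with nonzero denominator. If |pᵀ(μ₁−μ₂)| > t(√(pᵀw₁Σ₁p) + √(pᵀw₂Σ₂p)) for some t > 0, then J(p) ≤ 1/(1 + w₁w₂t²). -/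
/-!
Along `p`, write `x₁ = pᵀw₁Σ₁p`, `x₂ = pᵀw₂Σ₂p` and `d = pᵀ(μ₁ - μ₂)`. Because the mixture is
centred (`w₁μ₁ + w₂μ₂ = 0`, `w₁ + w₂ = 1`), the between-component variance `w₁(pᵀμ₁)² + w₂(pᵀμ₂)²`
equals `w₁w₂d²`, so `J(p) = σ / (σ + w₁w₂d²)` with `σ = x₁ + x₂`. The separation hypothesis gives
`t²σ ≤ t²(√x₁ + √x₂)² ≤ d²`, and `σ / (σ + w₁w₂d²)` is at most `1 / (1 + w₁w₂t²)` as soon as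
`t²σ ≤ d²`.
-/

open Matrix

theorem dotProduct_mulVec_vecMulVec_self {ι : Type*} [Fintype ι] {R : Type*} [CommSemiring R]
    (p μ : ι → R) : p ⬝ᵥ vecMulVec μ μ *ᵥ p = (p ⬝ᵥ μ) ^ 2 := by
  rw [vecMulVec_mulVec, dotProduct_smul, op_smul_eq_mul, dotProduct_comm μ p, sq]

theorem dotProduct_mulVec_smul_add_vecMulVec_self {ι : Type*} [Fintype ι] {R : Type*}
    [CommSemiring R] (w : R) (S : Matrix ι ι R) (p μ : ι → R) :
    p ⬝ᵥ (w • (S + vecMulVec μ μ)) *ᵥ p = p ⬝ᵥ (w • S) *ᵥ p + w * (p ⬝ᵥ μ) ^ 2 := by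
  rw [smul_add, add_mulVec, dotProduct_add, smul_mulVec w (vecMulVec μ μ), dotProduct_smul,
    dotProduct_mulVec_vecMulVec_self, smul_eq_mul]

theorem weighted_sq_add_eq_of_weighted_mean_zero {R : Type*} [CommRing R] {w₁ w₂ m₁ m₂ : R}
    (hsum : w₁ + w₂ = 1) (hmean : w₁ * m₁ + w₂ * m₂ = 0) :
    w₁ * m₁ ^ 2 + w₂ * m₂ ^ 2 = w₁ * w₂ * (m₁ - m₂) ^ 2 := by
  linear_combination (w₁ * m₁ + w₂ * m₂) * hmean - (w₁ * m₁ ^ 2 + w₂ * m₂ ^ 2) * hsum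

theorem sq_mul_add_le_sq_of_mul_sqrt_add_sqrt_le {t x y d : ℝ} (ht : 0 ≤ t) (hx : 0 ≤ x)
    (hy : 0 ≤ y) (h : t * (√x + √y) ≤ |d|) : t ^ 2 * (x + y) ≤ d ^ 2 := by
  have hsum_le : x + y ≤ (√x + √y) ^ 2 := by
    nlinarith [Real.sq_sqrt hx, Real.sq_sqrt hy, Real.sqrt_nonneg x, Real.sqrt_nonneg y]
  calc t ^ 2 * (x + y) ≤ t ^ 2 * (√x + √y) ^ 2 := by gcongr
    _ = (t * (√x + √y)) ^ 2 := by ring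
    _ ≤ |d| ^ 2 := by gcongr
    _ = d ^ 2 := sq_abs d

theorem div_add_mul_sq_le_one_div {σ c t d : ℝ} (hσ : 0 ≤ σ) (hc : 0 ≤ c)
    (h : t ^ 2 * σ ≤ d ^ 2) : σ / (σ + c * d ^ 2) ≤ 1 / (1 + c * t ^ 2) := by
  rcases (add_nonneg hσ (mul_nonneg hc (sq_nonneg d))).eq_or_lt with hD | hD
  · rw [← hD, div_zero]; positivity
  rw [div_le_div_iff₀ hD (by positivity)]
  nlinarith [mul_le_mul_of_nonneg_left h hc]

theorem stmt_4_general {n : ℕ} (w₁ w₂ : ℝ) (hw₁ : 0 < w₁) (hw₂ : 0 < w₂) (hsum : w₁ + w₂ = 1)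
    (μ₁ μ₂ : Fin n → ℝ) (hmean : w₁ • μ₁ + w₂ • μ₂ = 0)
    (S₁ S₂ : Matrix (Fin n) (Fin n) ℝ) (hS₁ : S₁.PosSemidef) (hS₂ : S₂.PosSemidef)
    (p : Fin n → ℝ)
    (t : ℝ) (ht : 0 < t)
    (hsep : t * (Real.sqrt (p ⬝ᵥ (w₁ • S₁) *ᵥ p) + Real.sqrt (p ⬝ᵥ (w₂ • S₂) *ᵥ p))
        < |p ⬝ᵥ (μ₁ - μ₂)|) :
    (p ⬝ᵥ (w₁ • S₁ + w₂ • S₂) *ᵥ p) /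
        (p ⬝ᵥ (w₁ • (S₁ + replicateCol (Fin 1) μ₁ * replicateRow (Fin 1) μ₁)
          + w₂ • (S₂ + replicateCol (Fin 1) μ₂ * replicateRow (Fin 1) μ₂)) *ᵥ p)
      ≤ 1 / (1 + w₁ * w₂ * t ^ 2) := by
  -- restated so that the `Fintype (Fin 1)` instance matches the goal's, not `Unique.fintype`
  have hrankOne (μ : Fin n → ℝ) :
      replicateCol (Fin 1) μ * replicateRow (Fin 1) μ = vecMulVec μ μ :=
    (vecMulVec_eq (Fin 1) μ μ).symm
  have hx₁ : 0 ≤ p ⬝ᵥ (w₁ • S₁) *ᵥ p := by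
    simpa using (hS₁.smul hw₁.le).dotProduct_mulVec_nonneg p
  have hx₂ : 0 ≤ p ⬝ᵥ (w₂ • S₂) *ᵥ p := by
    simpa using (hS₂.smul hw₂.le).dotProduct_mulVec_nonneg p
  have hmean_p : w₁ * (p ⬝ᵥ μ₁) + w₂ * (p ⬝ᵥ μ₂) = 0 := by
    simpa [dotProduct_add, dotProduct_smul] using congrArg (p ⬝ᵥ ·) hmean
  have hden : p ⬝ᵥ (w₁ • (S₁ + vecMulVec μ₁ μ₁) + w₂ • (S₂ + vecMulVec μ₂ μ₂)) *ᵥ p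
      = (p ⬝ᵥ (w₁ • S₁) *ᵥ p + p ⬝ᵥ (w₂ • S₂) *ᵥ p) + w₁ * w₂ * (p ⬝ᵥ (μ₁ - μ₂)) ^ 2 := by
    rw [add_mulVec, dotProduct_add, dotProduct_mulVec_smul_add_vecMulVec_self,
      dotProduct_mulVec_smul_add_vecMulVec_self, dotProduct_sub,
      ← weighted_sq_add_eq_of_weighted_mean_zero hsum hmean_p]
    ring
  rw [hrankOne, hrankOne, hden, add_mulVec, dotProduct_add]
  exact div_add_mul_sq_le_one_div (add_nonneg hx₁ hx₂) (by positivity)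
    (sq_mul_add_le_sq_of_mul_sqrt_add_sqrt_le ht.le hx₁ hx₂ hsep.le)

/-- Two-component mixture: weights `w₁,w₂ > 0` summing to 1, means with `w₁μ₁ + w₂μ₂ = 0`,
PSD covariances `S₁,S₂`.  If `|pᵀ(μ₁−μ₂)| > t(√(pᵀw₁S₁p) + √(pᵀw₂S₂p))` for a unit
vector `p` (with nonzero total-variance denominator) and `t > 0`, then the Fisher
discriminant satisfies `J(p) ≤ 1/(1 + w₁w₂t²)`. -/
theorem stmt_4 {n : ℕ} (w₁ w₂ : ℝ) (hw₁ : 0 < w₁) (hw₂ : 0 < w₂) (hsum : w₁ + w₂ = 1)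
    (μ₁ μ₂ : Fin n → ℝ) (hmean : w₁ • μ₁ + w₂ • μ₂ = 0)
    (S₁ S₂ : Matrix (Fin n) (Fin n) ℝ) (hS₁ : S₁.PosSemidef) (hS₂ : S₂.PosSemidef)
    (p : Fin n → ℝ) (hp : p ⬝ᵥ p = 1)
    (hden : p ⬝ᵥ (w₁ • (S₁ + replicateCol (Fin 1) μ₁ * replicateRow (Fin 1) μ₁)
        + w₂ • (S₂ + replicateCol (Fin 1) μ₂ * replicateRow (Fin 1) μ₂)) *ᵥ p ≠ 0)
    (t : ℝ) (ht : 0 < t)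
    (hsep : t * (Real.sqrt (p ⬝ᵥ (w₁ • S₁) *ᵥ p) + Real.sqrt (p ⬝ᵥ (w₂ • S₂) *ᵥ p))
        < |p ⬝ᵥ (μ₁ - μ₂)|) :
    (p ⬝ᵥ (w₁ • S₁ + w₂ • S₂) *ᵥ p) /
        (p ⬝ᵥ (w₁ • (S₁ + replicateCol (Fin 1) μ₁ * replicateRow (Fin 1) μ₁)
          + w₂ • (S₂ + replicateCol (Fin 1) μ₂ * replicateRow (Fin 1) μ₂)) *ᵥ p)
      ≤ 1 / (1 + w₁ * w₂ * t ^ 2) :=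
  stmt_4_general w₁ w₂ hw₁ hw₂ hsum μ₁ μ₂ hmean S₁ S₂ hS₁ hS₂ p t ht hsep
end

section
/- Suppose {wᵢ, μᵢ, Σᵢ}_{i=1}^k defines an isotropic mixture in ℝⁿ (i.e., ∑ᵢ wᵢμᵢ = 0 and ∑ᵢ wᵢ(Σᵢ + μᵢμᵢᵀ) = I) with dim(span{μ₁,…,μ_k}) = k−1. Let Σ = ∑ᵢ wᵢΣᵢ with eigenvalues λ₁ ≥ ⋯ ≥ λₙ and corresponding eigenvectors v₁,…,vₙ. Then span{v_{n−k+2},…,vₙ} = span{μ₁,…,μ_k}, and this span is the unique (k−1)-dimensional subspace minimizing S ↦ ∑_{j=1}^{k−1} pⱼᵀΣpⱼ over orthonormal bases {pⱼ} of S. -/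
/-!
Write `M = ∑ᵢ wᵢ μᵢμᵢᵀ` (`scatter w μ`); isotropy says `Σ + M = I`, so an eigenvector `x` of `Σ`
with eigenvalue `λ` satisfies `Mx = (1 - λ)x`. As `M ⪰ 0` has range `span{μᵢ}`, we get `λ ≤ 1`,
`x ∈ span{μᵢ}` when `λ < 1`, and `x ⊥ span{μᵢ}` when `λ = 1`. Hence the eigenvectors with
eigenvalue `< 1` span `span{μᵢ}`; there are `k - 1` of them, and by monotonicity they are the last
ones. For orthonormal `p₁, …, p_{k-1}`,
`∑ⱼ pⱼᵀΣpⱼ = (k - 1) - ∑ᵢ wᵢ ∑ⱼ (μᵢ ⬝ pⱼ)² ≥ (k - 1) - ∑ᵢ wᵢ ‖μᵢ‖²` by Bessel's inequality,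
with equality iff every `μᵢ` lies in `span{pⱼ}`; the last eigenvectors attain it.
-/

open Matrix Finset Submodule

section DotOrthonormal

variable {m ι : Type*} [Fintype m] [DecidableEq ι]

def DotOrthonormal (p : ι → m → ℝ) : Prop :=
  ∀ i j, p i ⬝ᵥ p j = if i = j then 1 else 0

namespace DotOrthonormal

variable {p : ι → m → ℝ}

theorem comp (hp : DotOrthonormal p) {κ : Type*} [DecidableEq κ] {f : κ → ι}
    (hf : f.Injective) : DotOrthonormal (p ∘ f) := fun i j => by
  simp only [Function.comp_apply, hp (f i) (f j), hf.eq_iff]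

variable [Fintype ι]

theorem sum_smul_dotProduct (hp : DotOrthonormal p) (c : ι → ℝ) (j : ι) :
    (∑ i, c i • p i) ⬝ᵥ p j = c j := by
  simp [sum_dotProduct, hp _ j]

theorem linearIndependent (hp : DotOrthonormal p) : LinearIndependent ℝ p :=
  Fintype.linearIndependent_iff.2 fun c hc j => by
    simpa [hc] using (hp.sum_smul_dotProduct c j).symm

theorem finrank_span (hp : DotOrthonormal p) :
    Module.finrank ℝ (span ℝ (Set.range p)) = Fintype.card ι :=
  finrank_span_eq_card hp.linearIndependent

theorem span_eq_top (hp : DotOrthonormal p) (hcard : Fintype.card ι = Fintype.card m) :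
    span ℝ (Set.range p) = ⊤ :=
  hp.linearIndependent.span_eq_top_of_card_eq_finrank' (by simpa using hcard)

theorem sub_sum_smul_dotProduct (hp : DotOrthonormal p) (x : m → ℝ) (j : ι) :
    (x - ∑ i, (x ⬝ᵥ p i) • p i) ⬝ᵥ p j = 0 := by
  rw [sub_dotProduct, hp.sum_smul_dotProduct, sub_self]

theorem sub_sum_smul_dotProduct_self (hp : DotOrthonormal p) (x : m → ℝ) :
    (x - ∑ i, (x ⬝ᵥ p i) • p i) ⬝ᵥ (x - ∑ i, (x ⬝ᵥ p i) • p i)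
      = x ⬝ᵥ x - ∑ i, (x ⬝ᵥ p i) ^ 2 := by
  set r := x - ∑ i, (x ⬝ᵥ p i) • p i
  have hr : r ⬝ᵥ ∑ i, (x ⬝ᵥ p i) • p i = 0 := by
    simp [dotProduct_sum, hp.sub_sum_smul_dotProduct x, r]
  calc r ⬝ᵥ r = r ⬝ᵥ x := by rw [dotProduct_sub, hr, sub_zero]
    _ = x ⬝ᵥ x - ∑ i, (x ⬝ᵥ p i) ^ 2 := by
      simp [r, sub_dotProduct, sum_dotProduct, dotProduct_comm (p _) x, sq]

theorem sum_sq_dotProduct_le (hp : DotOrthonormal p) (x : m → ℝ) :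
    ∑ i, (x ⬝ᵥ p i) ^ 2 ≤ x ⬝ᵥ x := by
  have := hp.sub_sum_smul_dotProduct_self x ▸ dotProduct_self_star_nonneg (R := ℝ)
    (x - ∑ i, (x ⬝ᵥ p i) • p i)
  linarith

theorem sum_sq_dotProduct_eq_iff_mem_span (hp : DotOrthonormal p) (x : m → ℝ) :
    ∑ i, (x ⬝ᵥ p i) ^ 2 = x ⬝ᵥ x ↔ x ∈ span ℝ (Set.range p) := by
  rw [eq_comm, ← sub_eq_zero, ← hp.sub_sum_smul_dotProduct_self, dotProduct_self_eq_zero,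
    sub_eq_zero, mem_span_range_iff_exists_fun]
  refine ⟨fun hx => ⟨_, hx.symm⟩, fun ⟨c, hc⟩ => ?_⟩
  subst hc
  simp [hp.sum_smul_dotProduct]

theorem sum_sq_dotProduct_eq (hp : DotOrthonormal p) (hcard : Fintype.card ι = Fintype.card m)
    (x : m → ℝ) : ∑ i, (x ⬝ᵥ p i) ^ 2 = x ⬝ᵥ x :=
  (hp.sum_sq_dotProduct_eq_iff_mem_span x).2 (hp.span_eq_top hcard ▸ mem_top)

end DotOrthonormal

end DotOrthonormal

section Scatter

variable {m κ : Type*} [Fintype m] [Fintype κ] (w : κ → ℝ) (μ : κ → m → ℝ)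

def scatter : Matrix m m ℝ := ∑ i, w i • vecMulVec (μ i) (μ i)

theorem scatter_mulVec (x : m → ℝ) : scatter w μ *ᵥ x = ∑ i, (w i * (μ i ⬝ᵥ x)) • μ i := by
  simp [scatter, sum_mulVec, smul_mulVec, vecMulVec_mulVec, smul_smul]

theorem scatter_mulVec_mem_span (x : m → ℝ) : scatter w μ *ᵥ x ∈ span ℝ (Set.range μ) :=
  mem_span_range_iff_exists_fun ℝ |>.2 ⟨_, (scatter_mulVec w μ x).symm⟩

theorem dotProduct_scatter_mulVec (x : m → ℝ) :
    x ⬝ᵥ scatter w μ *ᵥ x = ∑ i, w i * (μ i ⬝ᵥ x) ^ 2 := by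
  rw [dotProduct_comm, scatter_mulVec, sum_dotProduct]
  simp [sq, mul_assoc]

variable [DecidableEq m] {w μ} {W : Matrix m m ℝ}

theorem mulVec_eq_sub_scatter_mulVec (hW : W + scatter w μ = 1) (x : m → ℝ) :
    W *ᵥ x = x - scatter w μ *ᵥ x := by
  rw [eq_sub_iff_add_eq, ← add_mulVec, hW, one_mulVec]

theorem scatter_mulVec_of_mulVec_eq_smul (hW : W + scatter w μ = 1) {x : m → ℝ} {c : ℝ}
    (hx : W *ᵥ x = c • x) : scatter w μ *ᵥ x = (1 - c) • x := by
  rw [sub_smul, one_smul, ← hx, mulVec_eq_sub_scatter_mulVec hW, sub_sub_cancel]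

theorem le_one_of_mulVec_eq_smul (hW : W + scatter w μ = 1) (hw : ∀ i, 0 ≤ w i) {x : m → ℝ}
    (hx : x ⬝ᵥ x = 1) {c : ℝ} (h : W *ᵥ x = c • x) : c ≤ 1 := by
  have hc : x ⬝ᵥ scatter w μ *ᵥ x = 1 - c := by
    rw [scatter_mulVec_of_mulVec_eq_smul hW h, dotProduct_smul, hx, smul_eq_mul, mul_one]
  rw [dotProduct_scatter_mulVec] at hc
  linarith [sum_nonneg fun i (_ : i ∈ univ) => mul_nonneg (hw i) (sq_nonneg (μ i ⬝ᵥ x))]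

theorem mem_span_of_mulVec_eq_smul (hW : W + scatter w μ = 1) {x : m → ℝ} {c : ℝ}
    (hc : c < 1) (h : W *ᵥ x = c • x) : x ∈ span ℝ (Set.range μ) := by
  have hx : x = (1 - c)⁻¹ • scatter w μ *ᵥ x := by
    rw [scatter_mulVec_of_mulVec_eq_smul hW h, smul_smul, inv_mul_cancel₀ (by linarith),
      one_smul]
  exact hx ▸ smul_mem _ _ (scatter_mulVec_mem_span w μ x)

theorem dotProduct_eq_zero_of_mulVec_eq_self (hW : W + scatter w μ = 1) (hw : ∀ i, 0 < w i)
    {x : m → ℝ} (h : W *ᵥ x = x) (i : κ) : μ i ⬝ᵥ x = 0 := by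
  have h0 : ∑ i, w i * (μ i ⬝ᵥ x) ^ 2 = 0 := by
    rw [← dotProduct_scatter_mulVec, scatter_mulVec_of_mulVec_eq_smul hW (c := 1) (by simpa),
      sub_self, zero_smul, dotProduct_zero]
  have := (sum_eq_zero_iff_of_nonneg fun j _ => mul_nonneg (hw j).le (sq_nonneg _)).1 h0 i
    (mem_univ i)
  simpa [(hw i).ne'] using this

variable {ι : Type*} [Fintype ι] [DecidableEq ι] {p : ι → m → ℝ}

theorem DotOrthonormal.sum_dotProduct_mulVec_eq_card_sub (hW : W + scatter w μ = 1)
    (hp : DotOrthonormal p) :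
    ∑ j, p j ⬝ᵥ W *ᵥ p j = Fintype.card ι - ∑ i, w i * ∑ j, (μ i ⬝ᵥ p j) ^ 2 := by
  simp only [mulVec_eq_sub_scatter_mulVec hW, dotProduct_sub, dotProduct_scatter_mulVec,
    fun j => hp j j, if_pos, sum_sub_distrib, mul_sum]
  rw [sum_comm]
  simp

theorem DotOrthonormal.card_sub_le_sum_dotProduct_mulVec (hW : W + scatter w μ = 1)
    (hw : ∀ i, 0 ≤ w i) (hp : DotOrthonormal p) :
    Fintype.card ι - ∑ i, w i * (μ i ⬝ᵥ μ i) ≤ ∑ j, p j ⬝ᵥ W *ᵥ p j := by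
  rw [hp.sum_dotProduct_mulVec_eq_card_sub hW]
  gcongr with i
  · exact hw i
  · exact hp.sum_sq_dotProduct_le (μ i)

theorem DotOrthonormal.sum_dotProduct_mulVec_eq_iff (hW : W + scatter w μ = 1)
    (hw : ∀ i, 0 < w i) (hp : DotOrthonormal p) :
    ∑ j, p j ⬝ᵥ W *ᵥ p j = Fintype.card ι - ∑ i, w i * (μ i ⬝ᵥ μ i) ↔
      span ℝ (Set.range μ) ≤ span ℝ (Set.range p) := by
  rw [hp.sum_dotProduct_mulVec_eq_card_sub hW, sub_right_inj, eq_comm, ← sub_eq_zero,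
    ← sum_sub_distrib, sum_eq_zero_iff_of_nonneg, span_le, Set.range_subset_iff]
  · simp_rw [mem_univ, true_implies, ← mul_sub, mul_eq_zero, (hw _).ne', false_or, sub_eq_zero,
      eq_comm (a := μ _ ⬝ᵥ μ _), hp.sum_sq_dotProduct_eq_iff_mem_span, SetLike.mem_coe]
  · exact fun i _ => mul_sub (w i) _ _ ▸
      mul_nonneg (hw i).le (sub_nonneg.2 (hp.sum_sq_dotProduct_le (μ i)))

theorem span_eigenvectors_lt_one_eq (hW : W + scatter w μ = 1) (hw : ∀ i, 0 < w i)
    {v : ι → m → ℝ} {lam : ι → ℝ} (hv : DotOrthonormal v)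
    (hcard : Fintype.card ι = Fintype.card m) (heig : ∀ i, W *ᵥ v i = lam i • v i) :
    span ℝ (Set.range fun i : univ.filter (fun i => lam i < 1) => v i)
      = span ℝ (Set.range μ) := by
  set B := univ.filter fun i => lam i < 1
  have hvB : DotOrthonormal fun i : B => v i := hv.comp Subtype.val_injective
  refine le_antisymm (span_le.2 <| Set.range_subset_iff.2 fun i => ?_)
    (span_le.2 <| Set.range_subset_iff.2 fun j => ?_)
  · exact mem_span_of_mulVec_eq_smul hW (mem_filter.1 i.2).2 (heig i)
  · rw [SetLike.mem_coe, ← hvB.sum_sq_dotProduct_eq_iff_mem_span,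
      ← hv.sum_sq_dotProduct_eq hcard, sum_coe_sort B fun i => (μ j ⬝ᵥ v i) ^ 2]
    refine sum_subset (subset_univ B) fun i _ hi => ?_
    have hlam : lam i = 1 := le_antisymm
      (le_one_of_mulVec_eq_smul hW (fun i => (hw i).le) (by simpa using hv i i) (heig i))
      (by simpa [B] using hi)
    rw [dotProduct_eq_zero_of_mulVec_eq_self hW hw (by rw [heig, hlam, one_smul]), sq, zero_mul]

end Scatter

theorem Fin.filter_sub_card_le_eq {n : ℕ} {s : Finset (Fin n)}
    (hs : IsUpperSet (s : Set (Fin n))) : univ.filter (fun i : Fin n => n - #s ≤ i) = s := by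
  ext i
  rw [mem_filter, and_iff_right (mem_univ i)]
  constructor
  · intro hi
    by_contra his
    have hsub : Iic i ⊆ sᶜ := fun j hj => mem_compl.2 fun hjs => his (hs (mem_Iic.1 hj) hjs)
    have := card_le_card hsub
    rw [Fin.card_Iic, card_compl, Fintype.card_fin] at this
    omega
  · intro his
    have := card_le_card fun j hj => hs (mem_Ici.1 hj) his
    rw [Fin.card_Ici] at this
    omega

theorem stmt_7_general {n k : ℕ}
    (w : Fin k → ℝ) (hw : ∀ i, 0 < w i)
    (μ : Fin k → (Fin n → ℝ)) (S : Fin k → Matrix (Fin n) (Fin n) ℝ)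
    (hiso : ∑ i, w i • (S i + vecMulVec (μ i) (μ i)) = 1)
    (hdim : Module.finrank ℝ (Submodule.span ℝ (Set.range μ)) = k - 1)
    (lam : Fin n → ℝ) (hanti : Antitone lam)
    (v : Fin n → (Fin n → ℝ))
    (hortho : ∀ i j, v i ⬝ᵥ v j = if i = j then (1 : ℝ) else 0)
    (heig : ∀ i, (∑ j, w j • S j) *ᵥ v i = lam i • v i) :
    Submodule.span ℝ {x | ∃ i : Fin n, n - (k - 1) ≤ (i : ℕ) ∧ x = v i}
        = Submodule.span ℝ (Set.range μ) ∧
    ∀ p : Fin (k - 1) → (Fin n → ℝ),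
      (∀ i j, p i ⬝ᵥ p j = if i = j then (1 : ℝ) else 0) →
      ((∑ i ∈ Finset.univ.filter (fun i : Fin n => n - (k - 1) ≤ (i : ℕ)), lam i)
          ≤ ∑ j, p j ⬝ᵥ (∑ i, w i • S i) *ᵥ p j ∧
        ((∑ j, p j ⬝ᵥ (∑ i, w i • S i) *ᵥ p j
            = ∑ i ∈ Finset.univ.filter (fun i : Fin n => n - (k - 1) ≤ (i : ℕ)), lam i) →
          Submodule.span ℝ (Set.range p) = Submodule.span ℝ (Set.range μ))) := by
  have hW : ∑ i, w i • S i + scatter w μ = 1 := by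
    rw [scatter, ← sum_add_distrib, ← hiso]
    simp only [smul_add]
  have hv : DotOrthonormal v := hortho
  set B := univ.filter fun i : Fin n => lam i < 1
  have hspan := span_eigenvectors_lt_one_eq hW hw hv rfl heig
  have hvB : DotOrthonormal fun i : B => v i := hv.comp Subtype.val_injective
  have hcard : #B = k - 1 := by rw [← Fintype.card_coe B, ← hvB.finrank_span, hspan, hdim]
  have hB : univ.filter (fun i : Fin n => n - (k - 1) ≤ (i : ℕ)) = B :=
    hcard ▸ Fin.filter_sub_card_le_eq fun i j hij hi => by
      simpa [B] using (hanti hij).trans_lt (by simpa [B] using hi)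
  have hmin : ∑ i ∈ B, lam i = #B - ∑ t, w t * (μ t ⬝ᵥ μ t) := by
    rw [← Fintype.card_coe B, ← (hvB.sum_dotProduct_mulVec_eq_iff hW hw).2 hspan.ge,
      ← sum_coe_sort B]
    exact sum_congr rfl fun i _ => by simp [heig, hv i i]
  have hset : {x | ∃ i : Fin n, n - (k - 1) ≤ (i : ℕ) ∧ x = v i} = Set.range fun i : B => v i := by
    ext x
    simp [← hB, eq_comm]
  rw [hset, hB, hmin, hcard]
  refine ⟨hspan, fun p (hp : DotOrthonormal p) => ⟨?_, fun heq => ?_⟩⟩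
  · simpa using hp.card_sub_le_sum_dotProduct_mulVec hW fun i => (hw i).le
  · have hle := (hp.sum_dotProduct_mulVec_eq_iff hW hw).1 (by simpa using heq)
    exact (eq_of_le_of_finrank_le hle (by rw [hp.finrank_span, hdim, Fintype.card_fin])).symm

/-- For an isotropic mixture `{wᵢ, μᵢ, Σᵢ}` in `ℝⁿ` with `dim span{μᵢ} = k−1`, letting
`Σ = ∑ᵢ wᵢΣᵢ` have eigenvalues `λ₁ ≥ ⋯ ≥ λₙ` with orthonormal eigenvectors `v₁,…,vₙ`,
the span of the last `k−1` eigenvectors equals `span{μ₁,…,μ_k}`, and this subspace is the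
unique `(k−1)`-dimensional subspace minimizing `∑ⱼ pⱼᵀΣpⱼ` over orthonormal bases. -/
theorem stmt_7 {n k : ℕ} (hk : 1 ≤ k) (hkn : k ≤ n)
    (w : Fin k → ℝ) (hw : ∀ i, 0 < w i) (hwsum : ∑ i, w i = 1)
    (μ : Fin k → (Fin n → ℝ)) (S : Fin k → Matrix (Fin n) (Fin n) ℝ)
    (hS : ∀ i, (S i).PosDef)
    (hmean : ∑ i, w i • μ i = 0)
    (hiso : ∑ i, w i • (S i + vecMulVec (μ i) (μ i)) = 1)
    (hdim : Module.finrank ℝ (Submodule.span ℝ (Set.range μ)) = k - 1)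
    (lam : Fin n → ℝ) (hanti : Antitone lam)
    (v : Fin n → (Fin n → ℝ))
    (hortho : ∀ i j, v i ⬝ᵥ v j = if i = j then (1 : ℝ) else 0)
    (heig : ∀ i, (∑ j, w j • S j) *ᵥ v i = lam i • v i) :
    Submodule.span ℝ {x | ∃ i : Fin n, n - (k - 1) ≤ (i : ℕ) ∧ x = v i}
        = Submodule.span ℝ (Set.range μ) ∧
    ∀ p : Fin (k - 1) → (Fin n → ℝ),
      (∀ i j, p i ⬝ᵥ p j = if i = j then (1 : ℝ) else 0) →
      ((∑ i ∈ Finset.univ.filter (fun i : Fin n => n - (k - 1) ≤ (i : ℕ)), lam i)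
          ≤ ∑ j, p j ⬝ᵥ (∑ i, w i • S i) *ᵥ p j ∧
        ((∑ j, p j ⬝ᵥ (∑ i, w i • S i) *ᵥ p j
            = ∑ i ∈ Finset.univ.filter (fun i : Fin n => n - (k - 1) ≤ (i : ℕ)), lam i) →
          Submodule.span ℝ (Set.range p) = Submodule.span ℝ (Set.range μ))) :=
  stmt_7_general w hw μ S hiso hdim lam hanti v hortho heig
end

section
/- For an isotropic mixture with weights wᵢ, means μᵢ, covariances Σᵢ, suppose span{e₁,…,e_{k−1}} equals the intermean subspace span{μ₁,…,μ_k} and write wᵢΣᵢ in block form [[Aᵢ, Bᵢᵀ],[Bᵢ, Dᵢ]] with Aᵢ of size (k−1)×(k−1). If the overlap φ = max over unit vectors v in the intermean subspace of vᵀ(∑ᵢ wᵢΣᵢ)v, then for each i: ‖Aᵢ‖ ≤ φ, ‖Dᵢ‖ ≤ 1, and ‖Bᵢ‖ ≤ √φ. -/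
/-!
Work in the Loewner order. Each `wᵢΣᵢ` is positive semidefinite, so it lies
below `N = ∑ⱼ wⱼΣⱼ`, and compressing to a diagonal block is monotone: `Aᵢ ≤ N₁₁ ≤ φ • 1`, the second
inequality being the definition of `φ`, and `Dᵢ ≤ N₂₂ = 1`, because isotropy gives
`N = 1 - ∑ⱼ wⱼ μⱼμⱼᵀ` and the means vanish on the second block. For `0 ≤ A ≤ c • 1` we have
`‖A‖ ≤ c`. Finally, writing `wᵢΣᵢ = TᵀT` with `T = [T₁ T₂]` gives `Aᵢ = T₁ᵀT₁`, `Dᵢ = T₂ᵀT₂` and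
`Bᵢ = T₂ᵀT₁`, whence `‖Bᵢ‖² ≤ ‖T₂‖²‖T₁‖² = ‖Aᵢ‖‖Dᵢ‖ ≤ φ`.
-/

open Matrix
open scoped Matrix.Norms.L2Operator MatrixOrder

namespace Matrix

section Square

variable {n : Type*} [Fintype n] [DecidableEq n]

lemma le_smul_one_of_forall_dotProduct_mulVec_le {A : Matrix n n ℝ} (hA : A.IsHermitian) {c : ℝ}
    (h : ∀ u : n → ℝ, u ⬝ᵥ u = 1 → u ⬝ᵥ A *ᵥ u ≤ c) : A ≤ c • 1 := by
  refine le_iff.mpr (PosSemidef.of_dotProduct_mulVec_nonneg ?_ fun x => ?_)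
  · exact (isHermitian_one.smul (IsSelfAdjoint.all c)).sub hA
  rcases eq_or_ne x 0 with rfl | hx
  · simp
  have hpos : 0 < x ⬝ᵥ x := by simpa using dotProduct_self_star_pos_iff.mpr hx
  have hunit := h ((√(x ⬝ᵥ x))⁻¹ • x) (by
    rw [smul_dotProduct, dotProduct_smul, smul_smul, smul_eq_mul, ← mul_inv,
      Real.mul_self_sqrt hpos.le, inv_mul_cancel₀ hpos.ne'])
  rw [smul_dotProduct, mulVec_smul, dotProduct_smul, smul_smul, smul_eq_mul, ← mul_inv,
    Real.mul_self_sqrt hpos.le, inv_mul_le_iff₀ hpos] at hunit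
  simp only [star_trivial, sub_mulVec, dotProduct_sub, smul_mulVec, one_mulVec, dotProduct_smul,
    smul_eq_mul]
  linarith

lemma l2_opNorm_le_of_le_smul_one {A : Matrix n n ℝ} (hA : 0 ≤ A) {c : ℝ} (hc : 0 ≤ c)
    (h : A ≤ c • 1) : ‖A‖ ≤ c := by
  obtain ⟨T, rfl⟩ := CStarAlgebra.nonneg_iff_eq_star_mul_self.mp hA
  have hT : ‖T‖ ≤ √c := by
    rw [cstar_norm_def]
    refine ContinuousLinearMap.opNorm_le_bound _ (Real.sqrt_nonneg c) fun x => ?_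
    refine (sq_le_sq₀ (norm_nonneg _) (by positivity)).mp ?_
    have hx := (le_iff.mp h).dotProduct_mulVec_nonneg x.ofLp
    rw [star_trivial, sub_mulVec, dotProduct_sub, smul_mulVec, one_mulVec, dotProduct_smul,
      star_eq_conjTranspose, ← mulVec_mulVec, dotProduct_mulVec, vecMul_conjTranspose,
      star_trivial, sub_nonneg, smul_eq_mul] at hx
    rw [mul_pow, Real.sq_sqrt hc, ← real_inner_self_eq_norm_sq, ← real_inner_self_eq_norm_sq,
      EuclideanSpace.inner_eq_star_dotProduct, EuclideanSpace.inner_eq_star_dotProduct]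
    simpa [dotProduct_comm] using hx
  rw [star_eq_conjTranspose, l2_opNorm_conjTranspose_mul_self]
  calc ‖T‖ * ‖T‖ ≤ √c * √c := mul_self_le_mul_self (norm_nonneg _) hT
    _ = c := Real.mul_self_sqrt hc

end Square

section Blocks

variable {p q : Type*}

lemma toBlocks₁₁_mono {A B : Matrix (p ⊕ q) (p ⊕ q) ℝ} (h : A ≤ B) :
    A.toBlocks₁₁ ≤ B.toBlocks₁₁ :=
  (le_iff.mp h).submatrix Sum.inl

lemma toBlocks₂₂_mono {A B : Matrix (p ⊕ q) (p ⊕ q) ℝ} (h : A ≤ B) :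
    A.toBlocks₂₂ ≤ B.toBlocks₂₂ :=
  (le_iff.mp h).submatrix Sum.inr

lemma toBlocks₁₁_nonneg {A : Matrix (p ⊕ q) (p ⊕ q) ℝ} (h : 0 ≤ A) : 0 ≤ A.toBlocks₁₁ :=
  toBlocks₁₁_mono h

lemma toBlocks₂₂_nonneg {A : Matrix (p ⊕ q) (p ⊕ q) ℝ} (h : 0 ≤ A) : 0 ≤ A.toBlocks₂₂ :=
  toBlocks₂₂_mono h

lemma toBlocks₁₁_sum {ι : Type*} (s : Finset ι) (A : ι → Matrix (p ⊕ q) (p ⊕ q) ℝ) :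
    (∑ i ∈ s, A i).toBlocks₁₁ = ∑ i ∈ s, (A i).toBlocks₁₁ := by
  ext; simp [toBlocks₁₁, Matrix.sum_apply]

variable [DecidableEq p] [DecidableEq q]

lemma toBlocks₂₂_sum_smul_eq_one_of_isotropic {ι : Type*} [Fintype ι] {w : ι → ℝ}
    {μ : ι → p ⊕ q → ℝ} {S : ι → Matrix (p ⊕ q) (p ⊕ q) ℝ}
    (hiso : ∑ i, w i • (S i + vecMulVec (μ i) (μ i)) = 1) (hμ : ∀ i j, μ i (Sum.inr j) = 0) :
    (∑ i, w i • S i).toBlocks₂₂ = 1 := by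
  have hN : ∑ i, w i • S i = 1 - ∑ i, w i • vecMulVec (μ i) (μ i) := by
    rw [← hiso, eq_sub_iff_add_eq, ← Finset.sum_add_distrib]
    simp only [smul_add]
  rw [hN]
  ext a b
  simp [toBlocks₂₂, Matrix.sum_apply, one_apply, vecMulVec_apply, hμ]

variable [Fintype p] [Fintype q]

lemma PosSemidef.l2_opNorm_toBlocks₂₁_mul_self_le {M : Matrix (p ⊕ q) (p ⊕ q) ℝ}
    (hM : M.PosSemidef) :
    ‖M.toBlocks₂₁‖ * ‖M.toBlocks₂₁‖ ≤ ‖M.toBlocks₁₁‖ * ‖M.toBlocks₂₂‖ := by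
  obtain ⟨T, rfl⟩ := CStarAlgebra.nonneg_iff_eq_star_mul_self.mp hM.nonneg
  have h₁₁ : (star T * T).toBlocks₁₁ = T.toCols₁ᴴ * T.toCols₁ := by
    ext; simp [toBlocks₁₁, mul_apply]
  have h₂₂ : (star T * T).toBlocks₂₂ = T.toCols₂ᴴ * T.toCols₂ := by
    ext; simp [toBlocks₂₂, mul_apply]
  have h₂₁ : (star T * T).toBlocks₂₁ = T.toCols₂ᴴ * T.toCols₁ := by
    ext; simp [toBlocks₂₁, mul_apply]
  have hmul : ‖T.toCols₂ᴴ * T.toCols₁‖ ≤ ‖T.toCols₂‖ * ‖T.toCols₁‖ := by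
    simpa only [l2_opNorm_conjTranspose] using l2_opNorm_mul T.toCols₂ᴴ T.toCols₁
  rw [h₁₁, h₂₂, h₂₁, l2_opNorm_conjTranspose_mul_self, l2_opNorm_conjTranspose_mul_self]
  calc _ ≤ (‖T.toCols₂‖ * ‖T.toCols₁‖) * (‖T.toCols₂‖ * ‖T.toCols₁‖) :=
        mul_self_le_mul_self (norm_nonneg _) hmul
    _ = _ := by ring

end Blocks

end Matrix

theorem stmt_8_general {k m : ℕ}
    (w : Fin k → ℝ) (hw : ∀ i, 0 < w i)
    (μ : Fin k → ((Fin (k - 1) ⊕ Fin m) → ℝ))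
    (S : Fin k → Matrix (Fin (k - 1) ⊕ Fin m) (Fin (k - 1) ⊕ Fin m) ℝ)
    (hS : ∀ i, (S i).PosDef)
    (hiso : ∑ i, w i • (S i + vecMulVec (μ i) (μ i)) = 1)
    (hblock : ∀ i j, μ i (Sum.inr j) = 0)
    (φ : ℝ)
    (hφ : IsGreatest {r : ℝ | ∃ u : Fin (k - 1) → ℝ, u ⬝ᵥ u = 1 ∧
        r = u ⬝ᵥ (∑ i, (w i • S i).toBlocks₁₁) *ᵥ u} φ) :
    ∀ i, ‖(w i • S i).toBlocks₁₁‖ ≤ φ ∧ ‖(w i • S i).toBlocks₂₂‖ ≤ 1 ∧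
      ‖(w i • S i).toBlocks₂₁‖ ≤ Real.sqrt φ := by
  set N := ∑ j, w j • S j
  have hPSD : ∀ j, (w j • S j).PosSemidef := fun j => (hS j).posSemidef.smul (hw j).le
  have hle : ∀ j, w j • S j ≤ N := fun j =>
    Finset.single_le_sum (fun j _ => (hPSD j).nonneg) (Finset.mem_univ j)
  have hN₁₁ : N.toBlocks₁₁ = ∑ j, (w j • S j).toBlocks₁₁ := toBlocks₁₁_sum _ _
  have hN₁₁_psd : N.toBlocks₁₁.PosSemidef :=
    (toBlocks₁₁_nonneg (Finset.sum_nonneg fun j _ => (hPSD j).nonneg)).posSemidef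
  have hφ0 : 0 ≤ φ := by
    obtain ⟨u, -, rfl⟩ := hφ.1
    simpa [← hN₁₁] using hN₁₁_psd.dotProduct_mulVec_nonneg u
  have hA_le : N.toBlocks₁₁ ≤ φ • 1 :=
    le_smul_one_of_forall_dotProduct_mulVec_le hN₁₁_psd.isHermitian fun u hu =>
      hφ.2 ⟨u, hu, by rw [hN₁₁]⟩
  intro i
  have hA : ‖(w i • S i).toBlocks₁₁‖ ≤ φ :=
    l2_opNorm_le_of_le_smul_one (toBlocks₁₁_nonneg (hPSD i).nonneg) hφ0
      ((toBlocks₁₁_mono (hle i)).trans hA_le)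
  have hD : ‖(w i • S i).toBlocks₂₂‖ ≤ 1 := by
    refine l2_opNorm_le_of_le_smul_one (toBlocks₂₂_nonneg (hPSD i).nonneg) zero_le_one ?_
    simpa [N, toBlocks₂₂_sum_smul_eq_one_of_isotropic hiso hblock] using toBlocks₂₂_mono (hle i)
  refine ⟨hA, hD, Real.le_sqrt_of_sq_le ?_⟩
  calc ‖(w i • S i).toBlocks₂₁‖ ^ 2
      ≤ ‖(w i • S i).toBlocks₁₁‖ * ‖(w i • S i).toBlocks₂₂‖ := by
        simpa only [sq] using (hPSD i).l2_opNorm_toBlocks₂₁_mul_self_le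
    _ ≤ φ := by simpa using mul_le_mul hA hD (norm_nonneg _) hφ0

/-- Covariance structure: for an isotropic mixture whose means span exactly the first
`k−1` coordinate directions, writing `wᵢΣᵢ` in block form `[[Aᵢ, Bᵢᵀ],[Bᵢ, Dᵢ]]` (with
`Aᵢ` of size `(k−1)×(k−1)`), if `φ` is the overlap, i.e. the maximum of
`vᵀ(∑ᵢ wᵢΣᵢ)v` over unit vectors `v` in the intermean subspace, then for each `i`:
`‖Aᵢ‖ ≤ φ`, `‖Dᵢ‖ ≤ 1`, and `‖Bᵢ‖ ≤ √φ` (spectral norms). -/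
theorem stmt_8 {k m : ℕ} (hk : 2 ≤ k)
    (w : Fin k → ℝ) (hw : ∀ i, 0 < w i) (hwsum : ∑ i, w i = 1)
    (μ : Fin k → ((Fin (k - 1) ⊕ Fin m) → ℝ))
    (S : Fin k → Matrix (Fin (k - 1) ⊕ Fin m) (Fin (k - 1) ⊕ Fin m) ℝ)
    (hS : ∀ i, (S i).PosDef)
    (hmean : ∑ i, w i • μ i = 0)
    (hiso : ∑ i, w i • (S i + vecMulVec (μ i) (μ i)) = 1)
    (hblock : ∀ i j, μ i (Sum.inr j) = 0)
    (hdim : Module.finrank ℝ (Submodule.span ℝ (Set.range μ)) = k - 1)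
    (φ : ℝ)
    (hφ : IsGreatest {r : ℝ | ∃ u : Fin (k - 1) → ℝ, u ⬝ᵥ u = 1 ∧
        r = u ⬝ᵥ (∑ i, (w i • S i).toBlocks₁₁) *ᵥ u} φ) :
    ∀ i, ‖(w i • S i).toBlocks₁₁‖ ≤ φ ∧ ‖(w i • S i).toBlocks₂₂‖ ≤ 1 ∧
      ‖(w i • S i).toBlocks₂₁‖ ≤ Real.sqrt φ :=
  stmt_8_general w hw μ S hS hiso hblock φ hφ
end

section
/- Let {wᵢ, μᵢ, Σᵢ}_{i=1}^k define an isotropic mixture (∑wᵢμᵢ = 0, ∑wᵢ(Σᵢ+μᵢμᵢᵀ) = I) with overlap φ defined as the minimum over (k−1)-dimensional subspaces S of the maximum over unit p ∈ S of pᵀ(∑ᵢwᵢΣᵢ)p. Then the mixture obtained by removing any subset of components (renormalizing weights and re-centering at the new mean) has overlap at most φ. -/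
/-!
Fix a `(k - 1)`-dimensional subspace `U`. Cutting `U` down by the `k - |T|` linear conditions
`μᵢ ⬝ p = 0` for the removed components `i ∉ T` leaves a subspace of dimension at least `|T| - 1`,
which is admissible for the induced overlap. For a unit vector `p` in it, write
`aᵢ = pᵀΣᵢp`, `B = ∑ᵢ wᵢ (μᵢ ⬝ p)²`, `A_T = ∑_{i∈T} wᵢaᵢ` and `X = ∑ᵢ wᵢaᵢ = pᵀΣp`. The removed means
do not see `p`, and neither does the induced mean (by `∑ wᵢμᵢ = 0`), so the induced Rayleigh
quotient is `A_T / (A_T + B)`, while isotropy says `X + B = 1`. Since `x ↦ x / (x + B)` is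
monotone, the induced quotient is at most `X / (X + B) = X ≤ max_{p ∈ U} pᵀΣp`.
-/

open Matrix

/-- Generalized overlap of a mixture with intra-component covariance matrix `Sm` and
second-moment matrix `M`: the minimum over `d`-dimensional subspaces `S` of the maximum
over unit `p ∈ S` of `pᵀ Sm p / pᵀ M p`. -/
noncomputable def mixOverlap {n : ℕ} (Sm M : Matrix (Fin n) (Fin n) ℝ) (d : ℕ) : ℝ :=
  sInf {t : ℝ | ∃ S : Submodule ℝ (Fin n → ℝ), Module.finrank ℝ S = d ∧
    t = sSup {r : ℝ | ∃ p, p ∈ S ∧ p ⬝ᵥ p = 1 ∧ r = (p ⬝ᵥ Sm *ᵥ p) / (p ⬝ᵥ M *ᵥ p)}}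

open Module

namespace Matrix

variable {R m ι : Type*} [Fintype m]

theorem posSemidef_vecMulVec_self [CommRing R] [PartialOrder R]
    [StarRing R] [TrivialStar R] [StarOrderedRing R] (a : m → R) : (vecMulVec a a).PosSemidef := by
  simpa using posSemidef_vecMulVec_self_star a

theorem card_sub_card_le_finrank_ker_mulVecLin [Field R] [Fintype ι] (A : Matrix ι m R) :
    Fintype.card m - Fintype.card ι ≤ finrank R (LinearMap.ker A.mulVecLin) := by
  have h := LinearMap.finrank_range_add_finrank_ker A.mulVecLin
  have hrank : A.rank ≤ Fintype.card ι := A.rank_le_card_height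
  rw [Module.finrank_fintype_fun_eq_card] at h
  rw [Matrix.rank] at hrank
  omega

variable [CommRing R]

theorem dotProduct_sum_smul_mulVec (p : m → R) (s : Finset ι) (c : ι → R)
    (A : ι → Matrix m m R) :
    p ⬝ᵥ (∑ i ∈ s, c i • A i) *ᵥ p = ∑ i ∈ s, c i * (p ⬝ᵥ A i *ᵥ p) := by
  simp [sum_mulVec, dotProduct_sum, smul_mulVec, dotProduct_smul]

theorem dotProduct_vecMulVec_self_mulVec (p a : m → R) :
    p ⬝ᵥ vecMulVec a a *ᵥ p = (a ⬝ᵥ p) ^ 2 := by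
  rw [vecMulVec_mulVec]
  simp [dotProduct_comm p a, sq]

end Matrix

namespace Submodule

section

variable {K V : Type*} [DivisionRing K] [AddCommGroup V] [Module K V]

theorem exists_le_finrank_eq (U : Submodule K V) [FiniteDimensional K U] {d : ℕ}
    (hd : d ≤ finrank K U) : ∃ W ≤ U, finrank K W = d := by
  obtain ⟨f, hf⟩ := exists_linearIndependent_of_le_finrank hd
  refine ⟨span K (Set.range (U.subtype ∘ f)), ?_, ?_⟩
  · rw [span_le]
    rintro _ ⟨i, rfl⟩
    exact (f i).2
  · rw [finrank_span_eq_card (hf.map' U.subtype U.ker_subtype), Fintype.card_fin]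

theorem finrank_add_finrank_le_finrank_add_finrank_inf [FiniteDimensional K V]
    (U W : Submodule K V) : finrank K U + finrank K W ≤ finrank K V + finrank K ↥(U ⊓ W) := by
  rw [← finrank_sup_add_finrank_inf_eq]
  exact Nat.add_le_add_right (finrank_le _) _

end

theorem exists_le_finrank_eq_sub_forall_dotProduct_eq_zero {K m ι : Type*} [Field K]
    [Fintype m] [Fintype ι] (v : ι → m → K) (U : Submodule K (m → K)) :
    ∃ W ≤ U, finrank K W = finrank K U - Fintype.card ι ∧ ∀ p ∈ W, ∀ i, v i ⬝ᵥ p = 0 := by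
  set Z := LinearMap.ker (Matrix.of v).mulVecLin
  have hUZ := finrank_add_finrank_le_finrank_add_finrank_inf U Z
  have hZ : Fintype.card m - Fintype.card ι ≤ finrank K Z :=
    (Matrix.of v).card_sub_card_le_finrank_ker_mulVecLin
  rw [Module.finrank_fintype_fun_eq_card] at hUZ
  obtain ⟨W, hW, hWrank⟩ := (U ⊓ Z).exists_le_finrank_eq (d := finrank K U - Fintype.card ι)
    (by omega)
  refine ⟨W, hW.trans inf_le_left, hWrank, fun p hp i => ?_⟩
  exact congrFun (LinearMap.mem_ker.mp (hW hp).2) i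

end Submodule

theorem div_add_le_div_add {x y b : ℝ} (hx : 0 ≤ x) (hxy : x ≤ y) (hb : 0 ≤ b) :
    x / (x + b) ≤ y / (y + b) := by
  rcases (add_nonneg hx hb).eq_or_lt with h | h
  · rw [← h, div_zero]
    exact div_nonneg (hx.trans hxy) (by linarith)
  · rw [div_le_div_iff₀ h (by linarith)]
    nlinarith

section MinMax

variable {n : ℕ}

noncomputable def rayleigh (Sm M : Matrix (Fin n) (Fin n) ℝ) (p : Fin n → ℝ) : ℝ :=
  (p ⬝ᵥ Sm *ᵥ p) / (p ⬝ᵥ M *ᵥ p)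

/-- `mixOverlap Sm M d` unfolds to the infimum of `rayleighMax Sm M S` over `d`-dimensional `S`. -/
noncomputable def rayleighMax (Sm M : Matrix (Fin n) (Fin n) ℝ) (S : Submodule ℝ (Fin n → ℝ)) :
    ℝ :=
  sSup {r : ℝ | ∃ p, p ∈ S ∧ p ⬝ᵥ p = 1 ∧ r = rayleigh Sm M p}

theorem rayleigh_nonneg {Sm M : Matrix (Fin n) (Fin n) ℝ} (hSm : Sm.PosSemidef)
    (hM : M.PosSemidef) (p : Fin n → ℝ) : 0 ≤ rayleigh Sm M p :=
  div_nonneg (by simpa using hSm.dotProduct_mulVec_nonneg p)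
    (by simpa using hM.dotProduct_mulVec_nonneg p)

theorem rayleighMax_nonneg {Sm M : Matrix (Fin n) (Fin n) ℝ} (h : ∀ p, 0 ≤ rayleigh Sm M p)
    (S : Submodule ℝ (Fin n → ℝ)) : 0 ≤ rayleighMax Sm M S :=
  Real.sSup_nonneg <| by
    rintro _ ⟨p, -, -, rfl⟩
    exact h p

theorem rayleighMax_le_rayleighMax {Sm M Sm' M' : Matrix (Fin n) (Fin n) ℝ}
    {U V : Submodule ℝ (Fin n → ℝ)} {C : ℝ} (hVU : V ≤ U) (h0 : ∀ p, 0 ≤ rayleigh Sm M p)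
    (hC : ∀ p ∈ U, p ⬝ᵥ p = 1 → rayleigh Sm M p ≤ C)
    (hle : ∀ p ∈ V, p ⬝ᵥ p = 1 → rayleigh Sm' M' p ≤ rayleigh Sm M p) :
    rayleighMax Sm' M' V ≤ rayleighMax Sm M U := by
  have hbdd : BddAbove {r : ℝ | ∃ p, p ∈ U ∧ p ⬝ᵥ p = 1 ∧ r = rayleigh Sm M p} := by
    refine ⟨C, ?_⟩
    rintro _ ⟨p, hpU, hp, rfl⟩
    exact hC p hpU hp
  refine Real.sSup_le ?_ (rayleighMax_nonneg h0 U)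
  rintro _ ⟨p, hpV, hp, rfl⟩
  exact (hle p hpV hp).trans (le_csSup hbdd ⟨p, hVU hpV, hp, rfl⟩)

theorem mixOverlap_le_mixOverlap {Sm M Sm' M' : Matrix (Fin n) (Fin n) ℝ} {d d' : ℕ}
    (hd : ∃ U : Submodule ℝ (Fin n → ℝ), finrank ℝ U = d) (h0 : ∀ p, 0 ≤ rayleigh Sm' M' p)
    (h : ∀ U : Submodule ℝ (Fin n → ℝ), finrank ℝ U = d →
      ∃ V : Submodule ℝ (Fin n → ℝ), finrank ℝ V = d' ∧ rayleighMax Sm' M' V ≤ rayleighMax Sm M U) :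
    mixOverlap Sm' M' d' ≤ mixOverlap Sm M d := by
  obtain ⟨U₀, hU₀⟩ := hd
  refine le_csInf ⟨_, U₀, hU₀, rfl⟩ ?_
  rintro _ ⟨U, hU, rfl⟩
  obtain ⟨V, hV, hVU⟩ := h U hU
  have hbdd : BddBelow {t : ℝ | ∃ V : Submodule ℝ (Fin n → ℝ), finrank ℝ V = d' ∧
      t = rayleighMax Sm' M' V} := by
    refine ⟨0, ?_⟩
    rintro _ ⟨V, -, rfl⟩
    exact rayleighMax_nonneg h0 V
  exact (csInf_le hbdd ⟨V, hV, rfl⟩).trans hVU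

end MinMax

section Mixture

variable {ι : Type*} [Fintype ι] {n : ℕ} {w : ι → ℝ} {μ : ι → Fin n → ℝ}
  {S : ι → Matrix (Fin n) (Fin n) ℝ}

theorem rayleigh_one_of_dotProduct_self_eq_one (Sm : Matrix (Fin n) (Fin n) ℝ)
    {p : Fin n → ℝ} (hp : p ⬝ᵥ p = 1) : rayleigh Sm 1 p = p ⬝ᵥ Sm *ᵥ p := by
  rw [rayleigh, one_mulVec, hp, div_one]

theorem dotProduct_mulVec_add_sum_mul_sq_eq_one
    (hiso : ∑ i, w i • (S i + vecMulVec (μ i) (μ i)) = 1) {p : Fin n → ℝ} (hp : p ⬝ᵥ p = 1) :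
    p ⬝ᵥ (∑ i, w i • S i) *ᵥ p + ∑ i, w i * (μ i ⬝ᵥ p) ^ 2 = 1 := by
  have h := congrArg (fun M : Matrix (Fin n) (Fin n) ℝ => p ⬝ᵥ M *ᵥ p) hiso
  simp only [dotProduct_sum_smul_mulVec, one_mulVec, hp, add_mulVec, dotProduct_add,
    dotProduct_vecMulVec_self_mulVec, mul_add, Finset.sum_add_distrib] at h
  rwa [dotProduct_sum_smul_mulVec]

theorem rayleigh_le_one (hw : ∀ i, 0 ≤ w i)
    (hiso : ∑ i, w i • (S i + vecMulVec (μ i) (μ i)) = 1) {p : Fin n → ℝ} (hp : p ⬝ᵥ p = 1) :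
    rayleigh (∑ i, w i • S i) 1 p ≤ 1 := by
  rw [rayleigh_one_of_dotProduct_self_eq_one _ hp,
    ← dotProduct_mulVec_add_sum_mul_sq_eq_one hiso hp, le_add_iff_nonneg_right]
  exact Finset.sum_nonneg fun i _ => mul_nonneg (hw i) (sq_nonneg _)

theorem rayleigh_induced_le (hw : ∀ i, 0 ≤ w i) (hS : ∀ i, (S i).PosSemidef)
    (hmean : ∑ i, w i • μ i = 0) (hiso : ∑ i, w i • (S i + vecMulVec (μ i) (μ i)) = 1)
    {T : Finset ι} (hT : ∑ j ∈ T, w j ≠ 0) {p : Fin n → ℝ} (hp : p ⬝ᵥ p = 1)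
    (hpT : ∀ i ∉ T, μ i ⬝ᵥ p = 0) :
    rayleigh (∑ i ∈ T, (w i / ∑ j ∈ T, w j) • S i)
        (∑ i ∈ T, (w i / ∑ j ∈ T, w j) •
          (S i + vecMulVec (μ i - (∑ j ∈ T, w j)⁻¹ • ∑ j ∈ T, w j • μ j)
                           (μ i - (∑ j ∈ T, w j)⁻¹ • ∑ j ∈ T, w j • μ j))) p
      ≤ rayleigh (∑ i, w i • S i) 1 p := by
  set ω := ∑ j ∈ T, w j
  set a : ι → ℝ := fun i => p ⬝ᵥ S i *ᵥ p
  set B := ∑ i, w i * (μ i ⬝ᵥ p) ^ 2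
  have ha : ∀ i, 0 ≤ a i := fun i => by simpa using (hS i).dotProduct_mulVec_nonneg p
  have hsum_T : ∀ f : ι → ℝ, (∀ i ∉ T, f i = 0) → ∑ i ∈ T, f i = ∑ i, f i := fun f hf =>
    Finset.sum_subset (Finset.subset_univ T) fun i _ hi => hf i hi
  have hmean_p : (ω⁻¹ • ∑ j ∈ T, w j • μ j) ⬝ᵥ p = 0 := by
    rw [smul_dotProduct, sum_dotProduct,
      hsum_T _ fun i hi => by rw [smul_dotProduct, hpT i hi, smul_zero], ← sum_dotProduct, hmean,
      zero_dotProduct, smul_zero]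
  have hnum : p ⬝ᵥ (∑ i ∈ T, (w i / ω) • S i) *ᵥ p = ω⁻¹ * ∑ i ∈ T, w i * a i := by
    rw [dotProduct_sum_smul_mulVec, Finset.mul_sum]
    exact Finset.sum_congr rfl fun i _ => by ring
  have hden : p ⬝ᵥ (∑ i ∈ T, (w i / ω) • (S i + vecMulVec (μ i - ω⁻¹ • ∑ j ∈ T, w j • μ j)
      (μ i - ω⁻¹ • ∑ j ∈ T, w j • μ j))) *ᵥ p = ω⁻¹ * (∑ i ∈ T, w i * a i + B) := by
    have hB : ∑ i ∈ T, w i * (μ i ⬝ᵥ p) ^ 2 = B :=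
      hsum_T _ fun i hi => by rw [hpT i hi]; ring
    rw [dotProduct_sum_smul_mulVec, ← hB, ← Finset.sum_add_distrib, Finset.mul_sum]
    refine Finset.sum_congr rfl fun i _ => ?_
    rw [add_mulVec, dotProduct_add, dotProduct_vecMulVec_self_mulVec, sub_dotProduct, hmean_p]
    ring
  have hX : p ⬝ᵥ (∑ i, w i • S i) *ᵥ p = ∑ i, w i * a i := dotProduct_sum_smul_mulVec ..
  calc _ = (∑ i ∈ T, w i * a i) / (∑ i ∈ T, w i * a i + B) := by
        rw [rayleigh, hnum, hden, mul_div_mul_left _ _ (inv_ne_zero hT)]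
    _ ≤ (∑ i, w i * a i) / (∑ i, w i * a i + B) :=
        div_add_le_div_add (Finset.sum_nonneg fun i _ => mul_nonneg (hw i) (ha i))
          (Finset.sum_le_univ_sum_of_nonneg fun i => mul_nonneg (hw i) (ha i))
          (Finset.sum_nonneg fun i _ => mul_nonneg (hw i) (sq_nonneg _))
    _ = rayleigh (∑ i, w i • S i) 1 p := by
        rw [← hX, dotProduct_mulVec_add_sum_mul_sq_eq_one hiso hp, div_one,
          rayleigh_one_of_dotProduct_self_eq_one _ hp]

end Mixture

theorem stmt_16_general {n k : ℕ}
    (w : Fin k → ℝ) (hw : ∀ i, 0 < w i)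
    (μ : Fin k → (Fin n → ℝ)) (S : Fin k → Matrix (Fin n) (Fin n) ℝ)
    (hS : ∀ i, (S i).PosDef)
    (hmean : ∑ i, w i • μ i = 0)
    (hiso : ∑ i, w i • (S i + vecMulVec (μ i) (μ i)) = 1)
    (hdim : Module.finrank ℝ (Submodule.span ℝ (Set.range μ)) = k - 1)
    (T : Finset (Fin k)) (hT : T.Nonempty) :
    mixOverlap
        (∑ i ∈ T, (w i / ∑ j ∈ T, w j) • S i)
        (∑ i ∈ T, (w i / ∑ j ∈ T, w j) •
          (S i + vecMulVec (μ i - (∑ j ∈ T, w j)⁻¹ • ∑ j ∈ T, w j • μ j)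
                           (μ i - (∑ j ∈ T, w j)⁻¹ • ∑ j ∈ T, w j • μ j)))
        (T.card - 1)
      ≤ mixOverlap (∑ i, w i • S i) 1 (k - 1) := by
  have hw₀ : ∀ i, 0 ≤ w i := fun i => (hw i).le
  have hωT : 0 < ∑ j ∈ T, w j := Finset.sum_pos (fun i _ => hw i) hT
  have hweight : ∀ i, 0 ≤ w i / ∑ j ∈ T, w j := fun i => div_nonneg (hw₀ i) hωT.le
  have hSm : (∑ i, w i • S i).PosSemidef :=
    posSemidef_sum _ fun i _ => (hS i).posSemidef.smul (hw₀ i)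
  refine mixOverlap_le_mixOverlap ⟨_, hdim⟩
    (rayleigh_nonneg (posSemidef_sum _ fun i _ => (hS i).posSemidef.smul (hweight i))
      (posSemidef_sum _ fun i _ =>
        ((hS i).posSemidef.add (posSemidef_vecMulVec_self _)).smul (hweight i)))
    fun U hU => ?_
  obtain ⟨V, hVU, hV, hVμ⟩ :=
    U.exists_le_finrank_eq_sub_forall_dotProduct_eq_zero (fun i : ↥Tᶜ => μ i)
  refine ⟨V, ?_, rayleighMax_le_rayleighMax hVU (rayleigh_nonneg hSm PosSemidef.one)
    (fun p _ hp => rayleigh_le_one hw₀ hiso hp) fun p hpV hp =>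
      rayleigh_induced_le hw₀ (fun i => (hS i).posSemidef) hmean hiso hωT.ne' hp
        fun i hi => hVμ p hpV ⟨i, Finset.mem_compl.mpr hi⟩⟩
  have hTk : T.card ≤ k := by simpa using T.card_le_univ
  rw [hV, hU, Fintype.card_coe, Finset.card_compl, Fintype.card_fin]
  have hT₁ := hT.card_pos
  omega

/-- Removing any subset of components from an isotropic mixture (renormalizing the
weights and re-centering at the induced mean) cannot increase the overlap: the induced
mixture's overlap is at most the original overlap `φ = mixOverlap (∑ᵢ wᵢΣᵢ) I (k−1)`. -/
theorem stmt_16 {n k : ℕ} (hk : 2 ≤ k)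
    (w : Fin k → ℝ) (hw : ∀ i, 0 < w i) (hwsum : ∑ i, w i = 1)
    (μ : Fin k → (Fin n → ℝ)) (S : Fin k → Matrix (Fin n) (Fin n) ℝ)
    (hS : ∀ i, (S i).PosDef)
    (hmean : ∑ i, w i • μ i = 0)
    (hiso : ∑ i, w i • (S i + vecMulVec (μ i) (μ i)) = 1)
    (hdim : Module.finrank ℝ (Submodule.span ℝ (Set.range μ)) = k - 1)
    (T : Finset (Fin k)) (hT : T.Nonempty) :
    mixOverlap
        (∑ i ∈ T, (w i / ∑ j ∈ T, w j) • S i)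
        (∑ i ∈ T, (w i / ∑ j ∈ T, w j) •
          (S i + vecMulVec (μ i - (∑ j ∈ T, w j)⁻¹ • ∑ j ∈ T, w j • μ j)
                           (μ i - (∑ j ∈ T, w j)⁻¹ • ∑ j ∈ T, w j • μ j)))
        (T.card - 1)
      ≤ mixOverlap (∑ i, w i • S i) 1 (k - 1) :=
  stmt_16_general w hw μ S hS hmean hiso hdim T hT
end

section
/- Let φ ∈ [0,1) be the overlap of an isotropic mixture with means μ₁,…,μ_k spanning a (k−1)-dimensional subspace F, and let h be a unit vector with ‖proj_F(h)‖² ≥ 1 − ε. If P₁ has orthonormal columns spanning F, then maxᵢ (hᵀμᵢ)² ≥ ‖P₁ᵀh‖²·(1−φ) ≥ (1−ε)(1−φ). In particular if (1−ε)(1−φ) > 1/2, two of the projected means hᵀμᵢ are at distance more than 1/2 apart. -/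
/-!
Projecting `h` onto `F` does not change the inner products `⟪h, μᵢ⟫`, so applying the overlap
bound to the unit vector `proj_F h / ‖proj_F h‖` shows that the `w`-average of `⟪h, μᵢ⟫²` is at
least `‖proj_F h‖² (1 - φ)`, and some single term is at least the average. As the `w`-average of
the `⟪h, μᵢ⟫` is `0`, they take both signs, so their spread is at least `max |⟪h, μᵢ⟫| > 1/2`.
-/

open scoped RealInnerProductSpace

section WeightedAverage

variable {ι : Type*} [Fintype ι] [Nonempty ι] {w x : ι → ℝ}

theorem exists_ge_of_le_weighted_sum (hw : ∀ i, 0 < w i) (hwsum : ∑ i, w i = 1) {c : ℝ}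
    (hc : c ≤ ∑ i, w i * x i) : ∃ i, c ≤ x i := by
  have hle : ∑ i, w i * c ≤ ∑ i, w i * x i := by rwa [← Finset.sum_mul, hwsum, one_mul]
  obtain ⟨i, -, hi⟩ := Finset.exists_le_of_sum_le Finset.univ_nonempty hle
  exact ⟨i, le_of_mul_le_mul_left hi (hw i)⟩

theorem exists_abs_le_abs_sub_of_weighted_sum_eq_zero (hw : ∀ i, 0 < w i)
    (hsum : ∑ i, w i * x i = 0) (i : ι) : ∃ j, |x i| ≤ |x i - x j| := by
  rcases le_total 0 (x i) with hxi | hxi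
  · obtain ⟨j, -, hj⟩ := Finset.exists_le_of_sum_le (f := fun j ↦ w j * x j) (g := 0)
      Finset.univ_nonempty (by simp [hsum])
    have hxj : x j ≤ 0 := nonpos_of_mul_nonpos_right hj (hw j)
    exact ⟨j, by rw [abs_of_nonneg hxi, abs_of_nonneg (by linarith)]; linarith⟩
  · obtain ⟨j, -, hj⟩ := Finset.exists_le_of_sum_le (f := 0) (g := fun j ↦ w j * x j)
      Finset.univ_nonempty (by simp [hsum])
    have hxj : 0 ≤ x j := nonneg_of_mul_nonneg_right hj (hw j)
    exact ⟨j, by rw [abs_of_nonpos hxi, abs_of_nonpos (by linarith)]; linarith⟩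

end WeightedAverage

section InnerProductSpace

variable {E : Type*} [NormedAddCommGroup E] [InnerProductSpace ℝ E]
  {ι : Type*} [Fintype ι] {w : ι → ℝ} {μ : ι → E}

theorem sum_mul_inner_eq_inner_sum_smul (h : E) :
    ∑ i, w i * ⟪h, μ i⟫ = ⟪h, ∑ i, w i • μ i⟫ := by
  simp [inner_sum, real_inner_smul_right]

theorem inner_orthogonalProjectionOnto_eq_of_mem (K : Submodule ℝ E) [K.HasOrthogonalProjection]
    (h : E) {u : E} (hu : u ∈ K) : ⟪(K.orthogonalProjectionOnto h : E), u⟫ = ⟪h, u⟫ := by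
  rw [← Submodule.coe_mk u hu, ← Submodule.coe_inner,
    Submodule.inner_orthogonalProjectionOnto_eq_of_mem_right]

theorem sq_norm_mul_le_sum_mul_inner_sq {K : Submodule ℝ E} {c : ℝ}
    (hK : ∀ v ∈ K, ‖v‖ = 1 → c ≤ ∑ i, w i * ⟪v, μ i⟫ ^ 2) {p : E} (hp : p ∈ K) :
    ‖p‖ ^ 2 * c ≤ ∑ i, w i * ⟪p, μ i⟫ ^ 2 := by
  rcases eq_or_ne p 0 with rfl | hp0
  · simp
  have hunit := hK (‖p‖⁻¹ • p) (K.smul_mem _ hp) (norm_smul_inv_norm hp0)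
  have hscale : ∀ i, ⟪‖p‖⁻¹ • p, μ i⟫ ^ 2 = (‖p‖ ^ 2)⁻¹ * ⟪p, μ i⟫ ^ 2 := fun i ↦ by
    rw [real_inner_smul_left]; ring
  simp only [hscale, mul_left_comm (w _), ← Finset.mul_sum] at hunit
  rwa [le_inv_mul_iff₀ (by positivity)] at hunit

end InnerProductSpace

theorem stmt_17_general {n k : ℕ} (hk : 0 < k) (φ ε : ℝ) (hφ1 : φ < 1)
    (w : Fin k → ℝ) (hw : ∀ i, 0 < w i) (hwsum : ∑ i, w i = 1)
    (μ : Fin k → EuclideanSpace ℝ (Fin n))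
    (hmean : ∑ i, w i • μ i = 0)
    (F : Submodule ℝ (EuclideanSpace ℝ (Fin n))) (hF : F = Submodule.span ℝ (Set.range μ))
    (hover : ∀ v : EuclideanSpace ℝ (Fin n), v ∈ F → ‖v‖ = 1 →
      1 - φ ≤ ∑ i, w i * ⟪v, μ i⟫ ^ 2)
    (h : EuclideanSpace ℝ (Fin n))
    (hproj : 1 - ε ≤ ‖(F.orthogonalProjectionOnto h : EuclideanSpace ℝ (Fin n))‖ ^ 2) :
    (∃ i, ‖(F.orthogonalProjectionOnto h : EuclideanSpace ℝ (Fin n))‖ ^ 2 * (1 - φ)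
        ≤ ⟪h, μ i⟫ ^ 2 ∧ (1 - ε) * (1 - φ) ≤ ⟪h, μ i⟫ ^ 2) ∧
    ((1 : ℝ) / 2 < (1 - ε) * (1 - φ) → ∃ i j, 1 / 2 < |⟪h, μ i⟫ - ⟪h, μ j⟫|) := by
  have : Nonempty (Fin k) := ⟨⟨0, hk⟩⟩
  set p := (F.orthogonalProjectionOnto h : EuclideanSpace ℝ (Fin n))
  have hμF : ∀ i, μ i ∈ F := fun i ↦ hF ▸ Submodule.subset_span ⟨i, rfl⟩
  have havg : ‖p‖ ^ 2 * (1 - φ) ≤ ∑ i, w i * ⟪h, μ i⟫ ^ 2 := by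
    simpa only [inner_orthogonalProjectionOnto_eq_of_mem F h (hμF _)] using
      sq_norm_mul_le_sum_mul_inner_sq hover (F.orthogonalProjectionOnto h).2
  obtain ⟨i, hi⟩ := exists_ge_of_le_weighted_sum hw hwsum havg
  have hεφ : (1 - ε) * (1 - φ) ≤ ⟪h, μ i⟫ ^ 2 :=
    (mul_le_mul_of_nonneg_right hproj (by linarith)).trans hi
  refine ⟨⟨i, hi, hεφ⟩, fun hhalf ↦ ?_⟩
  have hmean0 : ∑ j, w j * ⟪h, μ j⟫ = 0 := by
    rw [sum_mul_inner_eq_inner_sum_smul, hmean, inner_zero_right]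
  obtain ⟨j, hj⟩ := exists_abs_le_abs_sub_of_weighted_sum_eq_zero hw hmean0 i
  have hlarge : 1 / 2 < |⟪h, μ i⟫| := by
    by_contra! hsmall
    nlinarith [abs_nonneg ⟪h, μ i⟫, sq_abs ⟪h, μ i⟫]
  exact ⟨i, j, hlarge.trans_le hj⟩

/-- Let `φ ∈ [0,1)` be the overlap of an isotropic mixture with means spanning the
`(k−1)`-dimensional subspace `F`, and `h` a unit vector with `‖proj_F h‖² ≥ 1 − ε`.
Then `maxᵢ (hᵀμᵢ)² ≥ ‖proj_F h‖²(1−φ) ≥ (1−ε)(1−φ)`; in particular if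
`(1−ε)(1−φ) > 1/2` then two projected means `hᵀμᵢ` are more than `1/2` apart. -/
theorem stmt_17 {n k : ℕ} (hk : 0 < k) (φ ε : ℝ) (hφ0 : 0 ≤ φ) (hφ1 : φ < 1)
    (w : Fin k → ℝ) (hw : ∀ i, 0 < w i) (hwsum : ∑ i, w i = 1)
    (μ : Fin k → EuclideanSpace ℝ (Fin n))
    (hmean : ∑ i, w i • μ i = 0)
    (F : Submodule ℝ (EuclideanSpace ℝ (Fin n))) (hF : F = Submodule.span ℝ (Set.range μ))
    (hdim : Module.finrank ℝ F = k - 1)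
    (hover : ∀ v : EuclideanSpace ℝ (Fin n), v ∈ F → ‖v‖ = 1 →
      1 - φ ≤ ∑ i, w i * ⟪v, μ i⟫ ^ 2)
    (h : EuclideanSpace ℝ (Fin n)) (hh : ‖h‖ = 1)
    (hproj : 1 - ε ≤ ‖(F.orthogonalProjectionOnto h : EuclideanSpace ℝ (Fin n))‖ ^ 2) :
    (∃ i, ‖(F.orthogonalProjectionOnto h : EuclideanSpace ℝ (Fin n))‖ ^ 2 * (1 - φ)
        ≤ ⟪h, μ i⟫ ^ 2 ∧ (1 - ε) * (1 - φ) ≤ ⟪h, μ i⟫ ^ 2) ∧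
    ((1 : ℝ) / 2 < (1 - ε) * (1 - φ) → ∃ i j, 1 / 2 < |⟪h, μ i⟫ - ⟪h, μ j⟫|) :=
  stmt_17_general hk φ ε hφ1 w hw hwsum μ hmean F hF hover h hproj
end

section
/- For an isotropic mixture with intermean subspace spanned by the columns of P₁ (orthonormal), complementary orthonormal P₂, and block decomposition P₁ᵀwᵢΣᵢP₁ = Aᵢ with ‖Aᵢ‖ ≤ φ, P₂ᵀwᵢΣᵢP₂ = Dᵢ with ‖Dᵢ‖ ≤ 1, P₂ᵀwᵢΣᵢP₁ = Bᵢ with ‖Bᵢ‖ ≤ √φ: for any unit vector h with ‖P₁ᵀh‖ = 1−ε, one has hᵀwᵢΣᵢh ≤ 2(φ + 2ε). -/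
/-!
Write `h = (x, y)` along the block decomposition. Positive semidefiniteness at `(x, -y)` bounds
the cross terms by the diagonal ones (the matrix AM-GM inequality), so
`hᵀ W h ≤ 2 (xᵀ A x + yᵀ D y) ≤ 2 (φ ‖x‖² + ‖y‖²)`, and `‖y‖² = 1 - (1 - ε)² ≤ 2ε`.
-/

open Matrix
open scoped Matrix.Norms.L2Operator

namespace Matrix

variable {m n R : Type*} [Fintype m] [Fintype n]

theorem star_sumElim_dotProduct_mulVec_add_neg [Ring R] [StarRing R]
    (M : Matrix (m ⊕ n) (m ⊕ n) R) (x : m → R) (y : n → R) :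
    star (Sum.elim x y) ⬝ᵥ M *ᵥ Sum.elim x y
        + star (Sum.elim x (-y)) ⬝ᵥ M *ᵥ Sum.elim x (-y)
      = 2 * (star x ⬝ᵥ M.toBlocks₁₁ *ᵥ x + star y ⬝ᵥ M.toBlocks₂₂ *ᵥ y) := by
  rw [← M.fromBlocks_toBlocks]
  simp only [Function.star_sumElim, star_neg, fromBlocks_mulVec, Sum.elim_comp_inl,
    Sum.elim_comp_inr, sumElim_dotProduct_sumElim, mulVec_neg, dotProduct_add, dotProduct_neg,
    neg_dotProduct, toBlocks_fromBlocks₁₁, toBlocks_fromBlocks₂₂, neg_neg]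
  noncomm_ring

theorem PosSemidef.star_sumElim_dotProduct_mulVec_le [Ring R] [PartialOrder R] [StarRing R]
    [IsOrderedAddMonoid R] {M : Matrix (m ⊕ n) (m ⊕ n) R} (hM : M.PosSemidef)
    (x : m → R) (y : n → R) :
    star (Sum.elim x y) ⬝ᵥ M *ᵥ Sum.elim x y
      ≤ 2 * (star x ⬝ᵥ M.toBlocks₁₁ *ᵥ x + star y ⬝ᵥ M.toBlocks₂₂ *ᵥ y) := by
  rw [← star_sumElim_dotProduct_mulVec_add_neg]
  exact le_add_of_nonneg_right (hM.dotProduct_mulVec_nonneg _)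

theorem dotProduct_mulVec_le_of_l2_opNorm_le [DecidableEq n] {M : Matrix n n ℝ} {c : ℝ}
    (hM : ‖M‖ ≤ c) (x : n → ℝ) :
    x ⬝ᵥ M *ᵥ x ≤ c * (x ⬝ᵥ x) := by
  set v := WithLp.toLp 2 x
  have hv : ‖v‖ ^ 2 = x ⬝ᵥ x := by
    rw [← real_inner_self_eq_norm_sq, EuclideanSpace.inner_toLp_toLp, star_trivial]
  calc x ⬝ᵥ M *ᵥ x = inner ℝ v (WithLp.toLp 2 (M *ᵥ x)) := by
        rw [EuclideanSpace.inner_toLp_toLp, star_trivial, dotProduct_comm]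
    _ ≤ ‖v‖ * ‖WithLp.toLp 2 (M *ᵥ x)‖ := real_inner_le_norm _ _
    _ ≤ ‖v‖ * (c * ‖v‖) := by
        gcongr
        exact (M.l2_opNorm_mulVec v).trans (by gcongr)
    _ = c * (x ⬝ᵥ x) := by rw [← hv]; ring

end Matrix

theorem stmt_18_general {r m : ℕ} (φ ε : ℝ)
    (wS : Matrix (Fin r ⊕ Fin m) (Fin r ⊕ Fin m) ℝ) (hpsd : wS.PosSemidef)
    (hA : ‖wS.toBlocks₁₁‖ ≤ φ) (hD : ‖wS.toBlocks₂₂‖ ≤ 1)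
    (h : (Fin r ⊕ Fin m) → ℝ) (hh : h ⬝ᵥ h = 1)
    (hproj : Real.sqrt (∑ j : Fin r, h (Sum.inl j) ^ 2) = 1 - ε) :
    h ⬝ᵥ wS *ᵥ h ≤ 2 * (φ + 2 * ε) := by
  set x := h ∘ Sum.inl
  set y := h ∘ Sum.inr
  have hxy : h = Sum.elim x y := (Sum.elim_comp_inl_inr h).symm
  have hx : x ⬝ᵥ x = (1 - ε) ^ 2 := by
    rw [← hproj, Real.sq_sqrt (by positivity)]
    simp only [dotProduct, Function.comp_apply, sq, x]
  have hsplit : x ⬝ᵥ x + y ⬝ᵥ y = 1 := by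
    rwa [hxy, sumElim_dotProduct_sumElim] at hh
  have hy0 : 0 ≤ y ⬝ᵥ y := dotProduct_self_star_nonneg y
  have hy : y ⬝ᵥ y ≤ 2 * ε := by nlinarith [sq_nonneg ε]
  have hblocks := hpsd.star_sumElim_dotProduct_mulVec_le x y
  simp only [star_trivial, ← hxy] at hblocks
  have hAx := dotProduct_mulVec_le_of_l2_opNorm_le hA x
  have hDy := dotProduct_mulVec_le_of_l2_opNorm_le hD y
  have hφ : 0 ≤ φ := (norm_nonneg _).trans hA
  calc h ⬝ᵥ wS *ᵥ h ≤ 2 * (φ * (x ⬝ᵥ x) + y ⬝ᵥ y) := by linarith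
    _ ≤ 2 * (φ * 1 + 2 * ε) := by gcongr; linarith
    _ = 2 * (φ + 2 * ε) := by ring

/-- With the block decomposition `wᵢΣᵢ = [[Aᵢ, Bᵢᵀ],[Bᵢ, Dᵢ]]` adapted to the intermean
subspace (spanned by the first block of coordinates), where `‖Aᵢ‖ ≤ φ`, `‖Dᵢ‖ ≤ 1`,
`‖Bᵢ‖ ≤ √φ`: for any unit vector `h` whose projection to the intermean subspace has norm
`1 − ε`, one has `hᵀwᵢΣᵢh ≤ 2(φ + 2ε)`. -/
theorem stmt_18 {r m : ℕ} (φ ε : ℝ) (hφ0 : 0 ≤ φ)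
    (wS : Matrix (Fin r ⊕ Fin m) (Fin r ⊕ Fin m) ℝ) (hpsd : wS.PosSemidef)
    (hA : ‖wS.toBlocks₁₁‖ ≤ φ) (hD : ‖wS.toBlocks₂₂‖ ≤ 1)
    (hB : ‖wS.toBlocks₂₁‖ ≤ Real.sqrt φ)
    (h : (Fin r ⊕ Fin m) → ℝ) (hh : h ⬝ᵥ h = 1)
    (hproj : Real.sqrt (∑ j : Fin r, h (Sum.inl j) ^ 2) = 1 - ε) :
    h ⬝ᵥ wS *ᵥ h ≤ 2 * (φ + 2 * ε) :=
  stmt_18_general φ ε wS hpsd hA hD h hh hproj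
end
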